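/- arXiv:1910.05480 — 2 statements merged into one kernel-verified Lean document; each statement's English description precedes it below -/
import Mathlib

section
/- Fix δ ∈ R^p, S ⊆ {1,…,M} with |S| = s, a partition of {1,…,p} into groups G_1,…,G_M, a vector U ∈ R^p, and λ_0 > 0. Suppose: (i) (Σ_{k∈A} ‖U_{G_k}‖^2)^{1/2} ≤ √s λ_0 for A = S and for the set Â of the s indices k with largest ‖U_{G_k}‖; (ii) ‖U_{G_k}‖ ≤ λ_0 for all k ∉ S ∪ Â; and (iii) 0 ≤ U^T δ + (1+ξ)λ_0 (√s‖δ‖ − Σ_{k∉S}‖δ_{G_k}‖) for some ξ > 0. Then Σ_{k∉S} ‖δ_{G_k}‖ ≤ √s (1 + 3/ξ) ‖δ‖, and hence Σ_{k=1}^M ‖δ_{G_k}‖ ≤ √s (2 + 3/ξ) ‖δ‖. -/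
open Matrix Finset

/-- Euclidean norm of a vector in `Fin p → ℝ`. -/
noncomputable def eunorm {p : ℕ} (u : Fin p → ℝ) : ℝ := Real.sqrt (∑ j, u j ^ 2)

/-- Euclidean norm of the restriction of `v` to the coordinates in `G`. -/
noncomputable def gnorm {p : ℕ} (G : Finset (Fin p)) (v : Fin p → ℝ) : ℝ :=
  Real.sqrt (∑ j ∈ G, v j ^ 2)

/-- the deterministic cone argument for the Group-Lasso. Under the bounds
(i) on `U` over `S` and over the top-`s` set `Â`, (ii) on groups outside `S ∪ Â`,
and the optimality inequality (iii), one gets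
`∑_{k∉S} ‖δ_{G_k}‖ ≤ √s (1+3/ξ)‖δ‖` and `∑_k ‖δ_{G_k}‖ ≤ √s (2+3/ξ)‖δ‖`. -/
theorem group_lasso_cone {p M : ℕ}
    (G : Fin M → Finset (Fin p))
    (hdisj : ∀ k l, k ≠ l → Disjoint (G k) (G l))
    (hcover : Finset.univ.biUnion G = (Finset.univ : Finset (Fin p)))
    (δ U : Fin p → ℝ)
    (S Ahat : Finset (Fin M)) (s : ℕ) (hScard : S.card = s) (hAcard : Ahat.card = s)
    (lam0 ξ : ℝ) (hlam0 : 0 < lam0) (hξ : 0 < ξ)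
    (hS : Real.sqrt (∑ k ∈ S, gnorm (G k) U ^ 2) ≤ Real.sqrt s * lam0)
    (hAhat : Real.sqrt (∑ k ∈ Ahat, gnorm (G k) U ^ 2) ≤ Real.sqrt s * lam0)
    (hout : ∀ k, k ∉ S ∪ Ahat → gnorm (G k) U ≤ lam0)
    (hopt : 0 ≤ U ⬝ᵥ δ
      + (1 + ξ) * lam0 * (Real.sqrt s * eunorm δ - ∑ k ∈ Sᶜ, gnorm (G k) δ)) :
    (∑ k ∈ Sᶜ, gnorm (G k) δ) ≤ Real.sqrt s * (1 + 3 / ξ) * eunorm δ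
    ∧ (∑ k, gnorm (G k) δ) ≤ Real.sqrt s * (2 + 3 / ξ) * eunorm δ := by
  classical
  set a : Fin M → ℝ := fun k => gnorm (G k) δ with ha
  set u : Fin M → ℝ := fun k => gnorm (G k) U with hu
  have hann : ∀ k, 0 ≤ a k := fun k => Real.sqrt_nonneg _
  have hunn : ∀ k, 0 ≤ u k := fun k => Real.sqrt_nonneg _
  have hδnn : 0 ≤ eunorm δ := Real.sqrt_nonneg _
  have hsnn : 0 ≤ Real.sqrt s := Real.sqrt_nonneg _
  have hgsq : ∀ k, a k ^ 2 = ∑ j ∈ G k, δ j ^ 2 := fun k =>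
    Real.sq_sqrt (Finset.sum_nonneg fun j _ => sq_nonneg _)
  have hpair : ∀ x ∈ (Finset.univ : Finset (Fin M)), ∀ y ∈ (Finset.univ : Finset (Fin M)),
      x ≠ y → Disjoint (G x) (G y) := fun x _ y _ hxy => hdisj x y hxy
  -- sum of squared group norms of δ over any index set is ≤ eunorm δ ^ 2
  have hkey : ∀ T : Finset (Fin M), ∑ k ∈ T, a k ^ 2 ≤ eunorm δ ^ 2 := by
    intro T
    have h1 : ∑ k ∈ T, a k ^ 2 = ∑ j ∈ T.biUnion G, δ j ^ 2 := by
      rw [Finset.sum_biUnion (fun x _ y _ hxy => hdisj x y hxy)]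
      exact Finset.sum_congr rfl fun k _ => hgsq k
    have h2 : eunorm δ ^ 2 = ∑ j, δ j ^ 2 :=
      Real.sq_sqrt (Finset.sum_nonneg fun j _ => sq_nonneg _)
    rw [h1, h2]
    exact Finset.sum_le_sum_of_subset_of_nonneg (Finset.subset_univ _)
      (fun j _ _ => sq_nonneg _)
  have hkey' : ∀ T : Finset (Fin M), Real.sqrt (∑ k ∈ T, a k ^ 2) ≤ eunorm δ := by
    intro T
    calc Real.sqrt (∑ k ∈ T, a k ^ 2) ≤ Real.sqrt (eunorm δ ^ 2) :=
          Real.sqrt_le_sqrt (hkey T)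
      _ = eunorm δ := Real.sqrt_sq hδnn
  -- per-group Cauchy-Schwarz
  have hgroup : ∀ k, ∑ j ∈ G k, U j * δ j ≤ u k * a k := fun k =>
    Real.sum_mul_le_sqrt_mul_sqrt (G k) U δ
  -- decomposition of the dot product
  have hdot : U ⬝ᵥ δ = ∑ k, ∑ j ∈ G k, U j * δ j := by
    rw [dotProduct, ← hcover, Finset.sum_biUnion hpair]
  -- bound over S
  have hbS : ∑ k ∈ S, ∑ j ∈ G k, U j * δ j ≤ Real.sqrt s * lam0 * eunorm δ := by
    calc ∑ k ∈ S, ∑ j ∈ G k, U j * δ j ≤ ∑ k ∈ S, u k * a k :=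
          Finset.sum_le_sum fun k _ => hgroup k
      _ ≤ Real.sqrt (∑ k ∈ S, u k ^ 2) * Real.sqrt (∑ k ∈ S, a k ^ 2) :=
          Real.sum_mul_le_sqrt_mul_sqrt S u a
      _ ≤ (Real.sqrt s * lam0) * eunorm δ :=
          mul_le_mul hS (hkey' S) (Real.sqrt_nonneg _)
            (by positivity)
  -- bound over Ahat \ S
  have hbA : ∑ k ∈ Ahat \ S, ∑ j ∈ G k, U j * δ j ≤ Real.sqrt s * lam0 * eunorm δ := by
    calc ∑ k ∈ Ahat \ S, ∑ j ∈ G k, U j * δ j ≤ ∑ k ∈ Ahat \ S, u k * a k :=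
          Finset.sum_le_sum fun k _ => hgroup k
      _ ≤ Real.sqrt (∑ k ∈ Ahat \ S, u k ^ 2) * Real.sqrt (∑ k ∈ Ahat \ S, a k ^ 2) :=
          Real.sum_mul_le_sqrt_mul_sqrt _ u a
      _ ≤ (Real.sqrt s * lam0) * eunorm δ := by
          refine mul_le_mul (le_trans ?_ hAhat) (hkey' _) (Real.sqrt_nonneg _) (by positivity)
          exact Real.sqrt_le_sqrt (Finset.sum_le_sum_of_subset_of_nonneg
            (Finset.sdiff_subset) (fun k _ _ => sq_nonneg _))
  -- bound over the complement of S ∪ Ahat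
  have hbC : ∑ k ∈ (S ∪ Ahat)ᶜ, ∑ j ∈ G k, U j * δ j ≤ lam0 * ∑ k ∈ Sᶜ, a k := by
    calc ∑ k ∈ (S ∪ Ahat)ᶜ, ∑ j ∈ G k, U j * δ j
        ≤ ∑ k ∈ (S ∪ Ahat)ᶜ, lam0 * a k := by
          refine Finset.sum_le_sum fun k hk => le_trans (hgroup k) ?_
          exact mul_le_mul_of_nonneg_right (hout k (Finset.mem_compl.mp hk)) (hann k)
      _ = lam0 * ∑ k ∈ (S ∪ Ahat)ᶜ, a k := by rw [Finset.mul_sum]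
      _ ≤ lam0 * ∑ k ∈ Sᶜ, a k := by
          refine mul_le_mul_of_nonneg_left ?_ hlam0.le
          refine Finset.sum_le_sum_of_subset_of_nonneg ?_ (fun k _ _ => hann k)
          exact Finset.compl_subset_compl.mpr Finset.subset_union_left
  -- total dot product bound
  have hdotb : U ⬝ᵥ δ ≤ 2 * (Real.sqrt s * lam0 * eunorm δ) + lam0 * ∑ k ∈ Sᶜ, a k := by
    have h1 : ∑ k ∈ (S ∪ Ahat), (∑ j ∈ G k, U j * δ j)
        + ∑ k ∈ (S ∪ Ahat)ᶜ, (∑ j ∈ G k, U j * δ j)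
        = ∑ k, ∑ j ∈ G k, U j * δ j := Finset.sum_add_sum_compl _ _
    have h2 : ∑ k ∈ (S ∪ Ahat), (∑ j ∈ G k, U j * δ j)
        = ∑ k ∈ S, (∑ j ∈ G k, U j * δ j) + ∑ k ∈ Ahat \ S, (∑ j ∈ G k, U j * δ j) := by
      rw [← Finset.sum_union Finset.disjoint_sdiff, Finset.union_sdiff_self_eq_union]
    rw [hdot, ← h1, h2]
    linarith [hbS, hbA, hbC]
  set T := ∑ k ∈ Sᶜ, a k with hT
  have hTnn : 0 ≤ T := Finset.sum_nonneg fun k _ => hann k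
  set B := Real.sqrt s * eunorm δ with hB
  have hBnn : 0 ≤ B := mul_nonneg hsnn hδnn
  -- key rearrangement
  have hq : lam0 * (ξ * T) ≤ lam0 * ((ξ + 3) * B) := by nlinarith [hopt, hdotb]
  have hTB : ξ * T ≤ (ξ + 3) * B := le_of_mul_le_mul_left hq hlam0
  have hfirst : T ≤ Real.sqrt s * (1 + 3 / ξ) * eunorm δ := by
    have heq : Real.sqrt s * (1 + 3 / ξ) * eunorm δ = ((ξ + 3) / ξ) * B := by
      rw [hB]; field_simp
    rw [heq, div_mul_eq_mul_div, le_div_iff₀ hξ]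
    linarith
  refine ⟨hfirst, ?_⟩
  -- sum over S
  have hbS2 : ∑ k ∈ S, a k ≤ Real.sqrt s * eunorm δ := by
    calc ∑ k ∈ S, a k = ∑ k ∈ S, 1 * a k := by simp
      _ ≤ Real.sqrt (∑ k ∈ S, (1:ℝ) ^ 2) * Real.sqrt (∑ k ∈ S, a k ^ 2) :=
          Real.sum_mul_le_sqrt_mul_sqrt S (fun _ => 1) a
      _ ≤ Real.sqrt s * eunorm δ := by
          refine mul_le_mul ?_ (hkey' S) (Real.sqrt_nonneg _) hsnn
          simp [hScard]
  have htot : ∑ k, a k = ∑ k ∈ S, a k + T := (Finset.sum_add_sum_compl S a).symm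
  have hring : Real.sqrt s * (2 + 3 / ξ) * eunorm δ
      = Real.sqrt s * eunorm δ + Real.sqrt s * (1 + 3 / ξ) * eunorm δ := by ring
  rw [htot, hring]
  exact add_le_add hbS2 hfirst
end

section
/- Let X be an L-subGaussian random vector with respect to its covariance Σ, β* ∈ R^p, and let α: (0,∞) → [0,∞) be nonincreasing with α(τ) ≤ inf_{y} inf_{|u|≤τ} ℓ''(y,u). Suppose E[(X^T u)^4] ≤ c^2 L^2 ‖Σ^{1/2}u‖^4 for a constant c and all u. Then for every u ∈ R^p and τ > 0, u^T K u ≥ α(τ) ‖Σ^{1/2}u‖^2 (1 − cL · P(|X^T β*| > τ)^{1/2}), where K = E[ℓ''(Y, X^T β*) X X^T]. -/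
/-!
Split the quadratic form at the event `A = {|Xᵀβ*| > τ}`. Off `A` the weight `ℓ''` is at least
`α(τ)`, so `uᵀKu ≥ α(τ) E[(Xᵀu)² 1_{Aᶜ}] = α(τ) (‖Σ^{1/2}u‖² - E[(Xᵀu)² 1_A])`, and by
Cauchy–Schwarz together with the fourth-moment bound
`E[(Xᵀu)² 1_A] ≤ E[(Xᵀu)⁴]^{1/2} P(A)^{1/2} ≤ cL‖Σ^{1/2}u‖² P(A)^{1/2}`.
-/

open MeasureTheory Matrix

theorem setIntegral_le_sqrt_integral_sq_mul_sqrt_measure {Ω : Type*} [MeasurableSpace Ω]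
    {μ : Measure Ω} [IsFiniteMeasure μ] {g : Ω → ℝ} {A : Set Ω}
    (hg0 : 0 ≤ᵐ[μ] g) (hg : MemLp g 2 μ) :
    ∫ ω in A, g ω ∂μ ≤ √(∫ ω, g ω ^ 2 ∂μ) * √(μ A).toReal := by
  have h2 : ENNReal.ofReal 2 = 2 := by norm_num
  have holder := integral_mul_le_Lp_mul_Lq_of_nonneg (μ := μ.restrict A) (f := g)
    (g := fun _ => (1 : ℝ)) Real.HolderConjugate.two_two (ae_restrict_of_ae hg0)
    (Filter.Eventually.of_forall fun _ => zero_le_one)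
    (by rw [h2]; exact hg.restrict A) (by rw [h2]; exact memLp_const 1)
  simp only [mul_one, one_pow, integral_const, smul_eq_mul, Real.rpow_two, ← Real.sqrt_eq_rpow,
    measureReal_restrict_apply_univ] at holder
  refine holder.trans (mul_le_mul_of_nonneg_right (Real.sqrt_le_sqrt ?_) (Real.sqrt_nonneg _))
  exact setIntegral_le_integral hg.integrable_sq (Filter.Eventually.of_forall fun _ => sq_nonneg _)

theorem mul_sub_le_integral_mul_of_le_off {Ω : Type*} [MeasurableSpace Ω] {μ : Measure Ω}
    {w g : Ω → ℝ} {A : Set Ω} {a B : ℝ} (hA : MeasurableSet A) (ha : 0 ≤ a)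
    (hw : ∀ ω, 0 ≤ w ω) (hg : ∀ ω, 0 ≤ g ω) (hwa : ∀ ω ∉ A, a ≤ w ω)
    (hgi : Integrable g μ) (hwgi : Integrable (fun ω => w ω * g ω) μ)
    (hB : ∫ ω in A, g ω ∂μ ≤ B) :
    a * (∫ ω, g ω ∂μ - B) ≤ ∫ ω, w ω * g ω ∂μ := calc
  a * (∫ ω, g ω ∂μ - B) ≤ a * ∫ ω in Aᶜ, g ω ∂μ := by
    rw [← integral_add_compl hA hgi]
    exact mul_le_mul_of_nonneg_left (by linarith) ha
  _ = ∫ ω in Aᶜ, a * g ω ∂μ := (integral_const_mul a _).symm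
  _ ≤ ∫ ω in Aᶜ, w ω * g ω ∂μ :=
    setIntegral_mono_on (hgi.const_mul a).integrableOn hwgi.integrableOn hA.compl
      fun ω hω => mul_le_mul_of_nonneg_right (hwa ω hω) (hg ω)
  _ ≤ ∫ ω, w ω * g ω ∂μ :=
    setIntegral_le_integral hwgi (Filter.Eventually.of_forall fun ω => mul_nonneg (hw ω) (hg ω))

theorem curvature_lower_bound_general {p : ℕ} {Ω : Type*} [MeasurableSpace Ω]
    (μ : Measure Ω) [IsProbabilityMeasure μ]
    (X : Ω → Fin p → ℝ) (Y : Ω → ℝ) (hXmeas : Measurable X)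
    (βs : Fin p → ℝ) (Sighalf : Matrix (Fin p) (Fin p) ℝ)
    (L c : ℝ) (hL : 0 < L) (hc : 0 < c)
    (hcov : ∀ u : Fin p → ℝ, ∫ ω, (X ω ⬝ᵥ u) ^ 2 ∂μ = eunorm (Sighalf.mulVec u) ^ 2)
    (hmoment4 : ∀ u : Fin p → ℝ,
      ∫ ω, (X ω ⬝ᵥ u) ^ 4 ∂μ ≤ c ^ 2 * L ^ 2 * eunorm (Sighalf.mulVec u) ^ 4)
    (ℓ'' : ℝ → ℝ → ℝ) (hℓnonneg : ∀ y u, 0 ≤ ℓ'' y u)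
    (α : ℝ → ℝ) (hαnonneg : ∀ τ, 0 < τ → 0 ≤ α τ)
    (hα : ∀ τ, 0 < τ → ∀ y u, |u| ≤ τ → α τ ≤ ℓ'' y u)
    (K : Matrix (Fin p) (Fin p) ℝ)
    (hK : ∀ u : Fin p → ℝ,
      u ⬝ᵥ K.mulVec u = ∫ ω, ℓ'' (Y ω) (X ω ⬝ᵥ βs) * (X ω ⬝ᵥ u) ^ 2 ∂μ)
    (hint2 : ∀ u : Fin p → ℝ, Integrable (fun ω => (X ω ⬝ᵥ u) ^ 2) μ)
    (hint4 : ∀ u : Fin p → ℝ, Integrable (fun ω => (X ω ⬝ᵥ u) ^ 4) μ)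
    (hintK : ∀ u : Fin p → ℝ,
      Integrable (fun ω => ℓ'' (Y ω) (X ω ⬝ᵥ βs) * (X ω ⬝ᵥ u) ^ 2) μ) :
    ∀ (u : Fin p → ℝ) (τ : ℝ), 0 < τ →
      α τ * eunorm (Sighalf.mulVec u) ^ 2
          * (1 - c * L * Real.sqrt (μ {ω | τ < |X ω ⬝ᵥ βs|}).toReal)
        ≤ u ⬝ᵥ K.mulVec u := by
  intro u τ hτ
  set S := eunorm (Sighalf.mulVec u) ^ 2
  have hA : MeasurableSet {ω | τ < |X ω ⬝ᵥ βs|} :=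
    measurableSet_lt measurable_const (by unfold dotProduct; fun_prop)
  have hsq : MemLp (fun ω => (X ω ⬝ᵥ u) ^ 2) 2 μ := by
    refine (memLp_two_iff_integrable_sq (by unfold dotProduct; fun_prop)).2 ?_
    simpa only [← pow_mul] using hint4 u
  have hfourth : √(∫ ω, ((X ω ⬝ᵥ u) ^ 2) ^ 2 ∂μ) ≤ c * L * S := by
    simp only [← pow_mul]
    exact Real.sqrt_le_iff.2 ⟨by positivity, (hmoment4 u).trans_eq (by ring)⟩
  have htail := (setIntegral_le_sqrt_integral_sq_mul_sqrt_measure (A := {ω | τ < |X ω ⬝ᵥ βs|})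
    (Filter.Eventually.of_forall fun ω => sq_nonneg (X ω ⬝ᵥ u)) hsq).trans
    (mul_le_mul_of_nonneg_right hfourth (Real.sqrt_nonneg _))
  have hlower := mul_sub_le_integral_mul_of_le_off hA (hαnonneg τ hτ)
    (fun ω => hℓnonneg (Y ω) _) (fun ω => sq_nonneg (X ω ⬝ᵥ u))
    (fun ω hω => hα τ hτ (Y ω) _ (not_lt.1 hω)) (hint2 u) (hintK u) htail
  rw [hcov, ← hK] at hlower
  linarith

/-- curvature lower bound by truncation. If `X` is `L`-subGaussian with
covariance `Σ` (so `E[(Xᵀu)²] = ‖Σ^{1/2}u‖²`), `E[(Xᵀu)⁴] ≤ c²L²‖Σ^{1/2}u‖⁴`, and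
`α(τ)` lower-bounds `ℓ''` on `|u| ≤ τ`, then for all `u` and `τ > 0`,
`uᵀKu ≥ α(τ)‖Σ^{1/2}u‖²(1 − cL·P(|Xᵀβ*| > τ)^{1/2})`
where `K = E[ℓ''(Y, Xᵀβ*) X Xᵀ]`. -/
theorem curvature_lower_bound {p : ℕ} {Ω : Type*} [MeasurableSpace Ω]
    (μ : Measure Ω) [IsProbabilityMeasure μ]
    (X : Ω → Fin p → ℝ) (Y : Ω → ℝ) (hXmeas : Measurable X) (hYmeas : Measurable Y)
    (βs : Fin p → ℝ) (Sighalf : Matrix (Fin p) (Fin p) ℝ)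
    (L c : ℝ) (hL : 0 < L) (hc : 0 < c)
    (hsubG : ∀ u : Fin p → ℝ,
      ∫ ω, Real.exp (u ⬝ᵥ X ω) ∂μ ≤ Real.exp (L ^ 2 * eunorm (Sighalf.mulVec u) ^ 2 / 2))
    (hcov : ∀ u : Fin p → ℝ, ∫ ω, (X ω ⬝ᵥ u) ^ 2 ∂μ = eunorm (Sighalf.mulVec u) ^ 2)
    (hmoment4 : ∀ u : Fin p → ℝ,
      ∫ ω, (X ω ⬝ᵥ u) ^ 4 ∂μ ≤ c ^ 2 * L ^ 2 * eunorm (Sighalf.mulVec u) ^ 4)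
    (ℓ'' : ℝ → ℝ → ℝ) (hℓnonneg : ∀ y u, 0 ≤ ℓ'' y u)
    (α : ℝ → ℝ) (hαnonneg : ∀ τ, 0 < τ → 0 ≤ α τ)
    (hαanti : ∀ τ₁ τ₂, 0 < τ₁ → τ₁ ≤ τ₂ → α τ₂ ≤ α τ₁)
    (hα : ∀ τ, 0 < τ → ∀ y u, |u| ≤ τ → α τ ≤ ℓ'' y u)
    (K : Matrix (Fin p) (Fin p) ℝ)
    (hK : ∀ u : Fin p → ℝ,
      u ⬝ᵥ K.mulVec u = ∫ ω, ℓ'' (Y ω) (X ω ⬝ᵥ βs) * (X ω ⬝ᵥ u) ^ 2 ∂μ)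
    (hint2 : ∀ u : Fin p → ℝ, Integrable (fun ω => (X ω ⬝ᵥ u) ^ 2) μ)
    (hint4 : ∀ u : Fin p → ℝ, Integrable (fun ω => (X ω ⬝ᵥ u) ^ 4) μ)
    (hintK : ∀ u : Fin p → ℝ,
      Integrable (fun ω => ℓ'' (Y ω) (X ω ⬝ᵥ βs) * (X ω ⬝ᵥ u) ^ 2) μ) :
    ∀ (u : Fin p → ℝ) (τ : ℝ), 0 < τ →
      α τ * eunorm (Sighalf.mulVec u) ^ 2
          * (1 - c * L * Real.sqrt (μ {ω | τ < |X ω ⬝ᵥ βs|}).toReal)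
        ≤ u ⬝ᵥ K.mulVec u :=
  curvature_lower_bound_general μ X Y hXmeas βs Sighalf L c hL hc hcov hmoment4 ℓ'' hℓnonneg α
    hαnonneg hα K hK hint2 hint4 hintK
end
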